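/- Let σ be a point chosen as follows: on a j-cycle assign i.i.d. uniform ±1 signs to the j edges. Let W be a uniformly random cyclically reduced word of length j in the 2d letters {π_i, π_i^{-1} : i ∈ [d]} up to dihedral equivalence, and let b(W) be the number of positions where the letter has the same sign as the preceding letter (cyclically). Then as d → ∞, the distribution of j - b(W) converges to the distribution of the number of (cyclic) sign changes in a sequence of j i.i.d. uniform ±1 signs arranged in a cycle. -/

import Mathlib

open Filter Finset
open scoped Classical

/-- A cyclic word of length `j` over the `2d` letters `{π_i^{±1} : i ∈ [d]}`:
position `i ↦ (letter index, sign)`. -/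
abbrev CWord (j d : ℕ) := ZMod j → Fin d × Bool

/-- The word is cyclically reduced: no letter is followed by its inverse. -/
def IsCycReduced {j d : ℕ} (w : CWord j d) : Prop :=
  ∀ i : ZMod j, w (i + 1) ≠ ((w i).1, !(w i).2)

/-- The dihedral relation: `w'` is obtained from `w` by a rotation, or by a
rotation composed with reversal-and-inversion. -/
def DihedralRel {j d : ℕ} (w w' : CWord j d) : Prop :=
  ∃ k : ZMod j, (∀ i, w' i = w (i + k)) ∨ (∀ i, w' i = ((w (k - i)).1, !(w (k - i)).2))

/-- Size of the dihedral orbit of `w`. -/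
noncomputable def orbCard {j d : ℕ} [NeZero j] (w : CWord j d) : ℕ :=
  (Finset.univ.filter fun w' : CWord j d => DihedralRel w w').card

/-- `b(w)`: the number of positions whose letter has the same sign as the
preceding letter (cyclically). -/
noncomputable def bword {j d : ℕ} [NeZero j] (w : CWord j d) : ℕ :=
  (Finset.univ.filter fun i : ZMod j => (w i).2 = (w (i + 1)).2).card

/-- The number of cyclic sign changes in a cyclic sequence of `±1` signs. -/
noncomputable def signChanges {j : ℕ} [NeZero j] (ε : ZMod j → Bool) : ℕ :=
  (Finset.univ.filter fun i : ZMod j => ε i ≠ ε (i + 1)).card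

set_option linter.unusedSectionVars false

namespace SCL

variable {j d : ℕ} [NeZero j]

def rotW (k : ZMod j) (w : CWord j d) : CWord j d := fun i => w (i + k)
def refW (k : ZMod j) (w : CWord j d) : CWord j d :=
  fun i => ((w (k - i)).1, !(w (k - i)).2)

noncomputable def Fmap (w : CWord j d) (p : ZMod j × Bool) : CWord j d :=
  if p.2 then refW p.1 w else rotW p.1 w

lemma orbit_eq (w : CWord j d) :
    Finset.univ.filter (fun w' => DihedralRel w w') = Finset.univ.image (Fmap w) := by
  ext w'
  simp only [mem_filter, mem_univ, true_and, mem_image]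
  constructor
  · rintro ⟨k, h | h⟩
    · exact ⟨(k, false), (funext fun i => (h i).symm)⟩
    · exact ⟨(k, true), (funext fun i => (h i).symm)⟩
  · rintro ⟨⟨k, b⟩, rfl⟩
    cases b
    · exact ⟨k, Or.inl fun i => rfl⟩
    · exact ⟨k, Or.inr fun i => rfl⟩

lemma orb_le (w : CWord j d) : orbCard w ≤ 2 * j := by
  rw [orbCard, orbit_eq]
  calc (Finset.univ.image (Fmap w)).card ≤ (Finset.univ : Finset (ZMod j × Bool)).card :=
        Finset.card_image_le
    _ = 2 * j := by simp [ZMod.card, mul_comm]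

lemma orb_pos (w : CWord j d) : 0 < orbCard w := by
  rw [orbCard]
  apply Finset.card_pos.mpr
  exact ⟨w, mem_filter.mpr ⟨mem_univ _, ⟨0, Or.inl fun i => by rw [add_zero]⟩⟩⟩

def BadW (w : CWord j d) : Prop :=
  (∃ k : ZMod j, k ≠ 0 ∧ rotW k w = w) ∨ ∃ k : ZMod j, refW k w = w

lemma bad_of_rot_eq_rot {w : CWord j d} {k k' : ZMod j} (hne : k ≠ k')
    (h : rotW k w = rotW k' w) : BadW w := by
  left
  refine ⟨k - k', sub_ne_zero.mpr hne, funext fun i => ?_⟩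
  have h2 := congrFun h (i - k')
  simp only [rotW] at h2 ⊢
  have e1 : i - k' + k = i + (k - k') := by ring
  have e2 : i - k' + k' = i := by ring
  rw [e1, e2] at h2
  exact h2

lemma bad_of_ref_eq_ref {w : CWord j d} {k k' : ZMod j} (hne : k ≠ k')
    (h : refW k w = refW k' w) : BadW w := by
  have h2 : ∀ i, w (k - i) = w (k' - i) := by
    intro i
    have := congrFun h i
    simp only [refW, Prod.mk.injEq, Bool.not_inj_iff] at this
    exact Prod.ext this.1 this.2
  left
  refine ⟨k - k', sub_ne_zero.mpr hne, funext fun i => ?_⟩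
  have h3 := h2 (k' - i)
  have e1 : k - (k' - i) = i + (k - k') := by ring
  have e2 : k' - (k' - i) = i := by ring
  rw [e1, e2] at h3
  simpa [rotW] using h3

lemma bad_of_rot_eq_ref {w : CWord j d} {k k' : ZMod j}
    (h : rotW k w = refW k' w) : BadW w := by
  right
  refine ⟨k + k', funext fun m => ?_⟩
  have h2 := congrFun h (m - k)
  simp only [rotW, refW] at h2 ⊢
  have e1 : m - k + k = m := by ring
  have e2 : k' - (m - k) = k + k' - m := by ring
  rw [e1, e2] at h2
  exact h2.symm

lemma inj_of_not_bad {w : CWord j d} (hb : ¬ BadW w) : Function.Injective (Fmap w) := by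
  rintro ⟨k, b⟩ ⟨k', b'⟩ h
  by_contra hne
  cases b <;> cases b' <;> simp only [Fmap, if_true, if_false, Bool.false_eq_true] at h
  · exact hb (bad_of_rot_eq_rot (fun hk => hne (by simp [hk])) h)
  · exact hb (bad_of_rot_eq_ref h)
  · exact hb (bad_of_rot_eq_ref h.symm)
  · exact hb (bad_of_ref_eq_ref (fun hk => hne (by simp [hk])) h)

lemma orb_of_not_bad {w : CWord j d} (hb : ¬ BadW w) : orbCard w = 2 * j := by
  rw [orbCard, orbit_eq, Finset.card_image_of_injective _ (inj_of_not_bad hb)]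
  simp [ZMod.card, mul_comm]


lemma card_determined {X : Type*} [Fintype X] (k : ZMod j) (p : (ZMod j → X) → Prop)
    (h : ∀ f g : ZMod j → X, p f → p g → (∀ i, i ≠ k → f i = g i) → f k = g k) :
    (Finset.univ.filter p).card ≤ Fintype.card X ^ (j - 1) := by
  have hinj : Set.InjOn (fun (f : ZMod j → X) (i : {i : ZMod j // i ≠ k}) => f i.1)
      (Finset.univ.filter p : Finset (ZMod j → X)) := by
    intro f hf g hg hfg
    simp only [Finset.coe_filter, Set.mem_setOf_eq, Finset.mem_univ, true_and] at hf hg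
    funext i
    by_cases hi : i = k
    · subst hi; exact h f g hf hg (fun i' hi' => congrFun hfg ⟨i', hi'⟩)
    · exact congrFun hfg ⟨i, hi⟩
  have hcard : Fintype.card {i : ZMod j // i ≠ k} = j - 1 := by
    have : Fintype.card {i : ZMod j // i ≠ k} = Fintype.card (ZMod j) - 1 := by
      rw [Fintype.card_subtype_compl, Fintype.card_subtype_eq]
    rw [this, ZMod.card]
  calc (Finset.univ.filter p).card
      ≤ (Finset.univ : Finset ({i : ZMod j // i ≠ k} → X)).card :=
        Finset.card_le_card_of_injOn _ (fun _ _ => Finset.mem_univ _) hinj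
    _ = Fintype.card X ^ (j - 1) := by
        rw [Finset.card_univ, Fintype.card_fun, hcard]

lemma card_rotFix (k : ZMod j) (hk : k ≠ 0) :
    (Finset.univ.filter fun w : CWord j d => rotW k w = w).card ≤ (2 * d) ^ (j - 1) := by
  have := card_determined (X := Fin d × Bool) k (fun w => rotW k w = w) ?_
  · calc (Finset.univ.filter fun w : CWord j d => rotW k w = w).card
        ≤ Fintype.card (Fin d × Bool) ^ (j - 1) := by convert this using 3 <;> exact Finset.filter_congr_decidable _
      _ = (2 * d) ^ (j - 1) := by simp [mul_comm]
  · intro f g hf hg hag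
    have h1 : f k = f 0 := by
      have := congrFun hf 0; simpa [rotW] using this
    have h2 : g k = g 0 := by
      have := congrFun hg 0; simpa [rotW] using this
    rw [h1, h2, hag 0 (Ne.symm hk)]

lemma card_refFix (k : ZMod j) :
    (Finset.univ.filter fun w : CWord j d => refW k w = w).card ≤ (2 * d) ^ (j - 1) := by
  by_cases hex : ∃ i : ZMod j, i + i = k
  · obtain ⟨i₀, hi₀⟩ := hex
    have hempty : (Finset.univ.filter fun w : CWord j d => refW k w = w) = ∅ := by
      apply Finset.eq_empty_of_forall_notMem
      intro w hw
      rw [Finset.mem_filter] at hw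
      have := congrFun hw.2 i₀
      have hk : k - i₀ = i₀ := by rw [← hi₀]; ring
      simp only [refW] at this
      rw [hk] at this
      have := congrArg Prod.snd this
      simp at this
    rw [hempty]; simp
  · push_neg at hex
    have hk0 : k ≠ 0 := by
      intro h; exact hex 0 (by rw [h, add_zero])
    have := card_determined (X := Fin d × Bool) 0 (fun w => refW k w = w) ?_
    · calc (Finset.univ.filter fun w : CWord j d => refW k w = w).card
          ≤ Fintype.card (Fin d × Bool) ^ (j - 1) := by convert this using 3 <;> exact Finset.filter_congr_decidable _
        _ = (2 * d) ^ (j - 1) := by simp [mul_comm]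
    · intro f g hf hg hag
      have h1 : f 0 = ((f k).1, !(f k).2) := by
        have := congrFun hf 0; simp only [refW, sub_zero] at this; exact this.symm
      have h2 : g 0 = ((g k).1, !(g k).2) := by
        have := congrFun hg 0; simp only [refW, sub_zero] at this; exact this.symm
      rw [h1, h2, hag k hk0]

lemma card_rotFix' (k : ZMod j) :
    (Finset.univ.filter fun w : CWord j d => k ≠ 0 ∧ rotW k w = w).card ≤ (2 * d) ^ (j - 1) := by
  by_cases hk : k = 0
  · subst hk
    have : (Finset.univ.filter fun w : CWord j d => (0 : ZMod j) ≠ 0 ∧ rotW 0 w = w) = ∅ := by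
      apply Finset.eq_empty_of_forall_notMem
      intro w hw
      rw [Finset.mem_filter] at hw
      exact hw.2.1 rfl
    rw [this]; simp
  · refine le_trans (Finset.card_le_card ?_) (card_rotFix k hk)
    intro w hw
    rw [Finset.mem_filter] at hw ⊢
    exact ⟨hw.1, hw.2.2⟩

lemma card_bad :
    (Finset.univ.filter fun w : CWord j d => BadW w).card ≤ 2 * j * (2 * d) ^ (j - 1) := by
  have hsub : (Finset.univ.filter fun w : CWord j d => BadW w) ⊆
      Finset.univ.biUnion (fun k : ZMod j =>
        (Finset.univ.filter fun w : CWord j d => k ≠ 0 ∧ rotW k w = w) ∪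
        (Finset.univ.filter fun w : CWord j d => refW k w = w)) := by
    intro w hw
    rw [Finset.mem_filter] at hw
    rcases hw.2 with ⟨k, hk, hfix⟩ | ⟨k, hfix⟩
    · exact Finset.mem_biUnion.mpr ⟨k, Finset.mem_univ _,
        Finset.mem_union_left _ (Finset.mem_filter.mpr ⟨Finset.mem_univ _, hk, hfix⟩)⟩
    · exact Finset.mem_biUnion.mpr ⟨k, Finset.mem_univ _,
        Finset.mem_union_right _ (Finset.mem_filter.mpr ⟨Finset.mem_univ _, hfix⟩)⟩
  have h2 : ∀ k : ZMod j,
      ((Finset.univ.filter fun w : CWord j d => k ≠ 0 ∧ rotW k w = w) ∪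
        (Finset.univ.filter fun w : CWord j d => refW k w = w)).card
      ≤ 2 * (2 * d) ^ (j - 1) := by
    intro k
    refine le_trans (Finset.card_union_le _ _) ?_
    have := card_rotFix' (d := d) k
    have := card_refFix (d := d) k
    omega
  refine le_trans (Finset.card_le_card hsub) (le_trans Finset.card_biUnion_le ?_)
  refine le_trans (Finset.sum_le_sum fun k _ => h2 k) ?_
  rw [Finset.sum_const, Finset.card_univ, ZMod.card, smul_eq_mul]
  ring_nf
  omega
def sgn (w : CWord j d) : ZMod j → Bool := fun i => (w i).2

lemma bword_add_signChanges (w : CWord j d) : bword w + signChanges (sgn w) = j := by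
  rw [bword, signChanges]
  have h := Finset.card_filter_add_card_filter_not
    (s := (Finset.univ : Finset (ZMod j))) (p := fun i => (w i).2 = (w (i+1)).2)
  rw [Finset.card_univ, ZMod.card] at h
  convert h using 3 <;> simp [sgn, Ne] <;> exact Finset.filter_congr_decidable _ _ _

lemma jsub_bword (w : CWord j d) : j - bword w = signChanges (sgn w) := by
  have := bword_add_signChanges w; omega

def emb (ε : ZMod j → Bool) (ℓ : ZMod j → Fin d) : CWord j d := fun i => (ℓ i, ε i)

lemma emb_inj (ε : ZMod j → Bool) : Function.Injective (emb (d := d) ε) := by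
  intro ℓ ℓ' h
  funext i
  have := congrFun h i
  exact (Prod.mk.injEq _ _ _ _).mp this |>.1

lemma image_emb (ε : ZMod j → Bool) :
    (Finset.univ.filter fun ℓ : ZMod j → Fin d => IsCycReduced (emb ε ℓ)).image (emb ε)
    = Finset.univ.filter (fun w : CWord j d => IsCycReduced w ∧ sgn w = ε) := by
  ext w
  simp only [Finset.mem_image, Finset.mem_filter, Finset.mem_univ, true_and]
  constructor
  · rintro ⟨ℓ, hred, rfl⟩
    exact ⟨hred, rfl⟩
  · rintro ⟨hred, rfl⟩
    refine ⟨fun i => (w i).1, ?_, ?_⟩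
    · exact hred
    · rfl

lemma card_T_eq (ε : ZMod j → Bool) :
    (Finset.univ.filter fun w : CWord j d => IsCycReduced w ∧ sgn w = ε).card
    = (Finset.univ.filter fun ℓ : ZMod j → Fin d => IsCycReduced (emb ε ℓ)).card := by
  rw [← image_emb, Finset.card_image_of_injective _ (emb_inj ε)]

lemma card_letters : (Finset.univ : Finset (ZMod j → Fin d)).card = d ^ j := by
  rw [Finset.card_univ, Fintype.card_fun, Fintype.card_fin, ZMod.card]

lemma card_T_le (ε : ZMod j → Bool) :
    (Finset.univ.filter fun w : CWord j d => IsCycReduced w ∧ sgn w = ε).card ≤ d ^ j := by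
  rw [card_T_eq]
  exact le_trans (Finset.card_filter_le _ _) card_letters.le

lemma card_notRed_le (ε : ZMod j → Bool) :
    (Finset.univ.filter fun ℓ : ZMod j → Fin d => ¬ IsCycReduced (emb ε ℓ)).card
    ≤ j * d ^ (j - 1) := by
  have hsub : (Finset.univ.filter fun ℓ : ZMod j → Fin d => ¬ IsCycReduced (emb ε ℓ)) ⊆
      Finset.univ.biUnion (fun i : ZMod j =>
        Finset.univ.filter fun ℓ : ZMod j → Fin d =>
          ℓ (i + 1) = ℓ i ∧ ε (i + 1) = !(ε i)) := by
    intro ℓ hℓ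
    rw [Finset.mem_filter, IsCycReduced] at hℓ
    push_neg at hℓ
    obtain ⟨i, hi⟩ := hℓ.2
    have : ℓ (i + 1) = ℓ i ∧ ε (i + 1) = !(ε i) := by
      have h1 := congrArg Prod.fst hi
      have h2 := congrArg Prod.snd hi
      exact ⟨h1, h2⟩
    exact Finset.mem_biUnion.mpr ⟨i, Finset.mem_univ _,
      Finset.mem_filter.mpr ⟨Finset.mem_univ _, this⟩⟩
  have hper : ∀ i : ZMod j,
      (Finset.univ.filter fun ℓ : ZMod j → Fin d =>
        ℓ (i + 1) = ℓ i ∧ ε (i + 1) = !(ε i)).card ≤ d ^ (j - 1) := by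
    intro i
    by_cases hε : ε (i + 1) = !(ε i)
    · have hne : i + 1 ≠ i := by
        intro h
        rw [h] at hε
        simp at hε
      have := card_determined (X := Fin d) (i + 1)
        (fun ℓ => ℓ (i + 1) = ℓ i ∧ ε (i + 1) = !(ε i)) ?_
      · calc _ ≤ Fintype.card (Fin d) ^ (j - 1) := by
              convert this using 3 <;> exact Finset.filter_congr_decidable _
          _ = d ^ (j - 1) := by rw [Fintype.card_fin]
      · intro f g hf hg hag
        rw [hf.1, hg.1]
        exact hag i (Ne.symm hne)
    · have : (Finset.univ.filter fun ℓ : ZMod j → Fin d =>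
          ℓ (i + 1) = ℓ i ∧ ε (i + 1) = !(ε i)) = ∅ := by
        apply Finset.eq_empty_of_forall_notMem
        intro ℓ hℓ
        rw [Finset.mem_filter] at hℓ
        exact hε hℓ.2.2
      rw [this]; simp
  refine le_trans (Finset.card_le_card hsub) (le_trans Finset.card_biUnion_le ?_)
  refine le_trans (Finset.sum_le_sum fun i _ => hper i) ?_
  rw [Finset.sum_const, Finset.card_univ, ZMod.card, smul_eq_mul]

lemma card_T_ge (ε : ZMod j → Bool) :
    d ^ j ≤ (Finset.univ.filter fun w : CWord j d => IsCycReduced w ∧ sgn w = ε).card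
      + j * d ^ (j - 1) := by
  rw [card_T_eq]
  have h := Finset.card_filter_add_card_filter_not
    (s := (Finset.univ : Finset (ZMod j → Fin d))) (p := fun ℓ => IsCycReduced (emb ε ℓ))
  rw [card_letters] at h
  have h2 := card_notRed_le (d := d) ε
  omega

lemma filter_card_split (E : Finset (ZMod j → Bool)) :
    (Finset.univ.filter fun w : CWord j d => IsCycReduced w ∧ sgn w ∈ E).card
    = ∑ ε ∈ E, (Finset.univ.filter fun w : CWord j d => IsCycReduced w ∧ sgn w = ε).card := by
  rw [← Finset.card_biUnion]
  · congr 1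
    ext w
    simp only [Finset.mem_biUnion, Finset.mem_filter, Finset.mem_univ, true_and]
    constructor
    · rintro ⟨hred, hmem⟩
      exact ⟨sgn w, hmem, hred, rfl⟩
    · rintro ⟨ε, hε, hred, rfl⟩
      exact ⟨hred, hε⟩
  · intro ε _ ε' _ hne
    rw [Function.onFun, Finset.disjoint_left]
    intro w hw hw'
    rw [Finset.mem_filter] at hw hw'
    exact hne (hw.2.2 ▸ hw'.2.2)

lemma card_E_le (E : Finset (ZMod j → Bool)) :
    (Finset.univ.filter fun w : CWord j d => IsCycReduced w ∧ sgn w ∈ E).card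
    ≤ E.card * d ^ j := by
  rw [filter_card_split]
  calc _ ≤ ∑ _ε ∈ E, d ^ j := Finset.sum_le_sum fun ε _ => card_T_le ε
    _ = E.card * d ^ j := by rw [Finset.sum_const, smul_eq_mul]

lemma card_E_ge (E : Finset (ZMod j → Bool)) :
    E.card * d ^ j
    ≤ (Finset.univ.filter fun w : CWord j d => IsCycReduced w ∧ sgn w ∈ E).card
      + E.card * (j * d ^ (j - 1)) := by
  rw [filter_card_split]
  calc E.card * d ^ j = ∑ _ε ∈ E, d ^ j := by rw [Finset.sum_const, smul_eq_mul]
    _ ≤ ∑ ε ∈ E, ((Finset.univ.filter fun w : CWord j d =>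
          IsCycReduced w ∧ sgn w = ε).card + j * d ^ (j - 1)) :=
        Finset.sum_le_sum fun ε _ => card_T_ge ε
    _ = _ := by rw [Finset.sum_add_distrib, Finset.sum_const, smul_eq_mul]

lemma one_le_jR : (1:ℝ) ≤ (j:ℝ) := by
  exact_mod_cast Nat.one_le_iff_ne_zero.mpr (NeZero.ne j)

lemma sum_inv_orb_close (T : Finset (CWord j d)) :
    |∑ w ∈ T, (1:ℝ)/(orbCard w) - T.card / (2*(j:ℝ))|
      ≤ ((Finset.univ.filter fun w : CWord j d => BadW w).card : ℝ) := by
  have h2j : (0:ℝ) < 2*(j:ℝ) := by have := one_le_jR (j := j); linarith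
  have heq : ∑ w ∈ T, (1:ℝ)/(orbCard w) - T.card/(2*(j:ℝ))
      = ∑ w ∈ T, ((1:ℝ)/(orbCard w) - 1/(2*(j:ℝ))) := by
    rw [Finset.sum_sub_distrib, Finset.sum_const, nsmul_eq_mul]
    ring
  rw [heq]
  refine le_trans (Finset.abs_sum_le_sum_abs _ _) ?_
  have hterm : ∀ w ∈ T, |(1:ℝ)/(orbCard w) - 1/(2*(j:ℝ))|
      ≤ if BadW w then (1:ℝ) else 0 := by
    intro w _
    by_cases hb : BadW w
    · rw [if_pos hb]
      have h1 : (0:ℝ) < (orbCard w : ℝ) := by exact_mod_cast orb_pos w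
      have h2 : (1:ℝ) ≤ (orbCard w : ℝ) := by exact_mod_cast orb_pos w
      have h3 : (1:ℝ)/(orbCard w : ℝ) ≤ 1 := by
        rw [div_le_one h1]; exact h2
      have h4 : (0:ℝ) ≤ (1:ℝ)/(orbCard w : ℝ) := by positivity
      have h5 : (0:ℝ) ≤ 1/(2*(j:ℝ)) := by positivity
      have h6 : (1:ℝ)/(2*(j:ℝ)) ≤ 1 := by
        rw [div_le_one h2j]; linarith [one_le_jR (j := j)]
      rw [abs_le]
      constructor <;> linarith
    · rw [if_neg hb, orb_of_not_bad hb]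
      have : ((2*j : ℕ) : ℝ) = 2*(j:ℝ) := by push_cast; ring
      rw [this, sub_self, abs_zero]
  refine le_trans (Finset.sum_le_sum hterm) ?_
  rw [Finset.sum_boole]
  have : T.filter (fun w => BadW w) ⊆ Finset.univ.filter (fun w : CWord j d => BadW w) :=
    Finset.filter_subset_filter _ (Finset.subset_univ T)
  exact_mod_cast Nat.cast_le.mpr (Finset.card_le_card this)

lemma card_E_le_pow (E : Finset (ZMod j → Bool)) : E.card ≤ 2 ^ j := by
  refine le_trans (Finset.card_le_univ E) ?_
  simp [Fintype.card_fun, ZMod.card]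

lemma tendsto_weighted (E : Finset (ZMod j → Bool)) :
    Filter.Tendsto (fun d : ℕ =>
      (∑ w ∈ Finset.univ.filter (fun w : CWord j d => IsCycReduced w ∧ sgn w ∈ E),
        (1:ℝ)/(orbCard w)) / (d:ℝ)^j)
      Filter.atTop (nhds ((E.card : ℝ)/(2*(j:ℝ)))) := by
  set c : ℝ := (E.card : ℝ)/(2*(j:ℝ)) with hc
  set K : ℝ := 2*(j:ℝ)*2^(j-1) + 2^j*(j:ℝ) with hK
  have hj1 : (1:ℝ) ≤ (j:ℝ) := one_le_jR
  have h2j : (0:ℝ) < 2*(j:ℝ) := by linarith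
  have hjj : j - 1 + 1 = j := Nat.succ_pred_eq_of_pos (Nat.pos_of_ne_zero (NeZero.ne j))
  have key : ∀ d : ℕ, 1 ≤ d →
      |(∑ w ∈ Finset.univ.filter (fun w : CWord j d => IsCycReduced w ∧ sgn w ∈ E),
        (1:ℝ)/(orbCard w)) / (d:ℝ)^j - c| ≤ K / (d:ℝ) := by
    intro d hd
    have hx : (0:ℝ) < (d:ℝ) := by exact_mod_cast hd
    have hxj : (0:ℝ) < (d:ℝ)^j := pow_pos hx j
    have hxj1 : (0:ℝ) < (d:ℝ)^(j-1) := pow_pos hx _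
    set S : ℝ := ∑ w ∈ Finset.univ.filter (fun w : CWord j d => IsCycReduced w ∧ sgn w ∈ E),
        (1:ℝ)/(orbCard w) with hSdef
    set M : ℕ := (Finset.univ.filter (fun w : CWord j d => IsCycReduced w ∧ sgn w ∈ E)).card
      with hMdef
    have hS : |S - (M:ℝ)/(2*(j:ℝ))| ≤ ((Finset.univ.filter fun w : CWord j d => BadW w).card : ℝ) :=
      sum_inv_orb_close _
    have hB : ((Finset.univ.filter fun w : CWord j d => BadW w).card : ℝ)
        ≤ 2*(j:ℝ)*2^(j-1)*(d:ℝ)^(j-1) := by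
      have h := card_bad (j := j) (d := d)
      calc ((Finset.univ.filter fun w : CWord j d => BadW w).card : ℝ)
          ≤ ((2 * j * (2 * d) ^ (j - 1) : ℕ) : ℝ) := by exact_mod_cast h
        _ = 2*(j:ℝ)*2^(j-1)*(d:ℝ)^(j-1) := by push_cast; rw [mul_pow]; ring
    have hM1 : (M:ℝ) ≤ (E.card:ℝ) * (d:ℝ)^j := by
      have := card_E_le (d := d) E
      exact_mod_cast this
    have hM2 : (E.card:ℝ) * (d:ℝ)^j ≤ (M:ℝ) + (E.card:ℝ) * ((j:ℝ) * (d:ℝ)^(j-1)) := by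
      have := card_E_ge (d := d) E
      exact_mod_cast this
    have hEc : (E.card : ℝ) ≤ 2^j := by exact_mod_cast card_E_le_pow E
    have hEc0 : (0:ℝ) ≤ (E.card : ℝ) := by positivity
    have t3 : |(M:ℝ) - (E.card:ℝ)*(d:ℝ)^j| ≤ 2^j * (j:ℝ) * (d:ℝ)^(j-1) := by
      have hpos : (0:ℝ) ≤ (j:ℝ) * (d:ℝ)^(j-1) := by positivity
      have hmul := mul_le_mul_of_nonneg_right hEc hpos
      rw [abs_le]
      constructor
      · nlinarith
      · nlinarith
    have t2 : |(M:ℝ)/(2*(j:ℝ)) - c * (d:ℝ)^j| ≤ 2^j * (j:ℝ) * (d:ℝ)^(j-1) := by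
      have : (M:ℝ)/(2*(j:ℝ)) - c * (d:ℝ)^j = ((M:ℝ) - (E.card:ℝ)*(d:ℝ)^j)/(2*(j:ℝ)) := by
        rw [hc]; field_simp
      rw [this, abs_div, abs_of_pos h2j]
      refine le_trans (div_le_self (abs_nonneg _) (by linarith)) t3
    have main : |S - c * (d:ℝ)^j| ≤ K * (d:ℝ)^(j-1) := by
      refine le_trans (abs_sub_le S ((M:ℝ)/(2*(j:ℝ))) (c * (d:ℝ)^j)) ?_
      have := le_trans hS hB
      rw [hK]
      nlinarith
    have hrw : S / (d:ℝ)^j - c = (S - c * (d:ℝ)^j)/(d:ℝ)^j := by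
      field_simp
    rw [hrw, abs_div, abs_of_pos hxj]
    rw [div_le_iff₀ hxj]
    calc |S - c * (d:ℝ)^j| ≤ K * (d:ℝ)^(j-1) := main
      _ = K / (d:ℝ) * (d:ℝ)^j := by
          rw [← hjj, pow_succ]
          field_simp
          ring
          rw [Nat.add_sub_cancel_left]
  have h0 : Filter.Tendsto (fun d : ℕ => K/(d:ℝ)) Filter.atTop (nhds 0) :=
    tendsto_const_div_atTop_nhds_zero_nat K
  rw [← tendsto_sub_nhds_zero_iff]
  apply squeeze_zero_norm' _ h0
  filter_upwards [Filter.eventually_ge_atTop 1] with d hd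
  simpa [Real.norm_eq_abs] using key d hd

end SCL

/-- Let `W` be uniform over dihedral equivalence classes of cyclically reduced
words of length `j` over `2d` letters (a class is weighted `1` by summing
`1/|orbit|` over its members).  As `d → ∞`, the law of `j - b(W)` converges to
the law of the number of cyclic sign changes of `j` i.i.d. uniform `±1` signs. -/
theorem signChange_limit (j : ℕ) [NeZero j] (r : ℕ) :
    Tendsto (fun d : ℕ =>
        (∑ w ∈ Finset.univ.filter
            (fun w : CWord j d => IsCycReduced w ∧ j - bword w = r),
            (1 : ℝ) / orbCard w)
          / ∑ w ∈ Finset.univ.filter (fun w : CWord j d => IsCycReduced w),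
            (1 : ℝ) / orbCard w)
      atTop
      (nhds (((Finset.univ.filter fun ε : ZMod j → Bool => signChanges ε = r).card : ℝ)
        / 2 ^ j)) := by

  set E : Finset (ZMod j → Bool) := Finset.univ.filter (fun ε => signChanges ε = r) with hE
  have hfilt1 : ∀ d : ℕ,
      (Finset.univ.filter (fun w : CWord j d => IsCycReduced w ∧ j - bword w = r))
      = Finset.univ.filter (fun w : CWord j d => IsCycReduced w ∧ SCL.sgn w ∈ E) := by
    intro d
    apply Finset.filter_congr
    intro w _
    have hmem : SCL.sgn w ∈ E ↔ signChanges (SCL.sgn w) = r := by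
      rw [hE, Finset.mem_filter]
      simp
    rw [hmem, SCL.jsub_bword w]
  have hfilt2 : ∀ d : ℕ,
      (Finset.univ.filter (fun w : CWord j d => IsCycReduced w))
      = Finset.univ.filter (fun w : CWord j d =>
          IsCycReduced w ∧ SCL.sgn w ∈ (Finset.univ : Finset (ZMod j → Bool))) := by
    intro d
    apply Finset.filter_congr
    intro w _
    simp
  have h1 := SCL.tendsto_weighted (j := j) E
  have h2 := SCL.tendsto_weighted (j := j) (Finset.univ : Finset (ZMod j → Bool))
  have hcard : (((Finset.univ : Finset (ZMod j → Bool)).card : ℕ) : ℝ) = 2^j := by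
    rw [Finset.card_univ]
    simp [Fintype.card_fun, ZMod.card]
  rw [hcard] at h2
  have hj1 : (1:ℝ) ≤ (j:ℝ) := SCL.one_le_jR
  have hj0 : (0:ℝ) < (j:ℝ) := by linarith
  have hne : ((2:ℝ)^j)/(2*(j:ℝ)) ≠ 0 := by positivity
  have h3 := h1.div h2 hne
  have hval : ((E.card:ℝ)/(2*(j:ℝ))) / ((2:ℝ)^j/(2*(j:ℝ))) = (E.card:ℝ)/2^j := by
    rw [div_div_div_cancel_right₀ (by positivity : 2*(j:ℝ) ≠ 0)]
  rw [hval] at h3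
  refine Filter.Tendsto.congr' ?_ h3
  filter_upwards [Filter.eventually_ge_atTop 1] with d hd
  have hx0 : (0:ℝ) < (d:ℝ) := by exact_mod_cast hd
  have hx : ((d:ℝ))^j ≠ 0 := by positivity
  rw [hfilt1 d, hfilt2 d]
  simp only [Pi.div_apply]
  rw [div_div_div_cancel_right₀ hx]
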